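/- Equational characterisation of hyper normalisation: let A be a nonempty finite type and n : ℕ. The hyper normalisation N is the unique function h : D(Fin n × A) → D(Fin n × D(A)) with the following property: for every r ∈ D(Fin n) and every family φ : Fin n → D(A), h applied to the distribution (i,a) ↦ r(i)·φ(i)(a) equals the distribution Σ_i r(i)·η(i, φ(i)). In particular N itself satisfies this equation. -/

import Mathlib

open scoped ENNReal

noncomputable section

namespace HyperNorm

variable {A B : Type*} {n m : ℕ}

/-- `ω[i] = Σ_a ω(i,a)`. -/
def fmass (ω : PMF (Fin n × A)) (i : Fin n) : ℝ≥0∞ := ∑' a, ω (i, a)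

lemma tsum_fmass (ω : PMF (Fin n × A)) : ∑' i, fmass ω i = 1 := by
  simp only [fmass]
  rw [← ENNReal.tsum_prod']
  exact ω.tsum_coe

lemma fmass_ne_top (ω : PMF (Fin n × A)) (i : Fin n) : fmass ω i ≠ ⊤ := by
  apply ne_top_of_le_ne_top ENNReal.one_ne_top
  rw [← tsum_fmass ω]
  exact ENNReal.le_tsum i

/-- The first marginal `i ↦ ω[i]` as a distribution. -/
def fstM (ω : PMF (Fin n × A)) : PMF (Fin n) :=
  ⟨fun i => fmass ω i, ENNReal.summable.hasSum_iff.mpr (tsum_fmass ω)⟩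

/-- The normalised `i`-th component `ω_i(a) = ω(i,a)/ω[i]` (junk value if `ω[i] = 0`,
which never contributes to `hnorm` below since it is weighted by `ω[i] = 0`). -/
def ncond (ω : PMF (Fin n × A)) (i : Fin n) : PMF A :=
  if h : fmass ω i ≠ 0 then
    ⟨fun a => ω (i, a) / fmass ω i,
      ENNReal.summable.hasSum_iff.mpr (by
        simp only [div_eq_mul_inv]
        rw [ENNReal.tsum_mul_right, ← div_eq_mul_inv]
        exact ENNReal.div_self h (fmass_ne_top ω i))⟩
  else PMF.pure (ω.support_nonempty.some.2)

/-- Hyper normalisation `N(ω) = Σ_{i with ω[i] ≠ 0} ω[i]·η(i, ω_i)`. -/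
def hnorm (ω : PMF (Fin n × A)) : PMF (Fin n × PMF A) :=
  (fstM ω).bind fun i => PMF.pure (i, ncond ω i)

/-- Graph map `gr(f)(x)(y,x') = f(x)(y) if x' = x, else 0`. -/
def gr {X Y : Type*} (f : X → PMF Y) : X → PMF (Y × X) :=
  fun x => (f x).map fun y => (y, x)

lemma _root_.PMF.bind_congr_of_mem_support {α β : Type*} {p : PMF α} {f g : α → PMF β}
    (hfg : ∀ a ∈ p.support, f a = g a) : p.bind f = p.bind g := by
  ext b
  simp only [PMF.bind_apply]
  refine tsum_congr fun a => ?_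
  by_cases ha : p a = 0
  · simp [ha]
  · rw [hfg a ((PMF.mem_support_iff p a).mpr ha)]

lemma _root_.PMF.bind_map_prodMk_apply {ι α : Type*} (r : PMF ι) (φ : ι → PMF α) (j : ι) (b : α) :
    (r.bind fun i => (φ i).map fun a => (i, a)) (j, b) = r j * φ j b := by
  rw [PMF.bind_apply, tsum_eq_single j]
  · congr 1
    rw [PMF.map_apply, tsum_eq_single b] <;> simp +contextual [Prod.ext_iff, eq_comm]
  · intro i hi
    simp [PMF.map_apply, Prod.ext_iff, hi.symm]

lemma fstM_apply (ω : PMF (Fin n × A)) (i : Fin n) : fstM ω i = fmass ω i := rfl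

lemma ncond_apply (ω : PMF (Fin n × A)) {i : Fin n} (h : fmass ω i ≠ 0) (a : A) :
    ncond ω i a = ω (i, a) / fmass ω i := by
  rw [show ncond ω i = _ from dif_pos h]
  rfl

lemma fmass_bind_map (r : PMF (Fin n)) (φ : Fin n → PMF A) (j : Fin n) :
    fmass (r.bind fun i => (φ i).map fun a => (i, a)) j = r j := by
  simp only [fmass, PMF.bind_map_prodMk_apply]
  rw [ENNReal.tsum_mul_left, (φ j).tsum_coe, mul_one]

lemma fstM_bind_map (r : PMF (Fin n)) (φ : Fin n → PMF A) :
    fstM (r.bind fun i => (φ i).map fun a => (i, a)) = r :=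
  PMF.ext (fmass_bind_map r φ)

lemma ncond_bind_map (r : PMF (Fin n)) (φ : Fin n → PMF A) {j : Fin n} (h : r j ≠ 0) :
    ncond (r.bind fun i => (φ i).map fun a => (i, a)) j = φ j := by
  ext a
  rw [ncond_apply _ (by rwa [fmass_bind_map]), PMF.bind_map_prodMk_apply, fmass_bind_map,
    mul_comm, ENNReal.mul_div_cancel_right h (PMF.apply_ne_top r j)]

lemma fstM_bind_ncond (ω : PMF (Fin n × A)) :
    (fstM ω).bind (fun i => (ncond ω i).map fun a => (i, a)) = ω := by
  ext ⟨j, a⟩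
  rw [PMF.bind_map_prodMk_apply, fstM_apply]
  by_cases h : fmass ω j = 0
  · rw [h, zero_mul, eq_comm, ← nonpos_iff_eq_zero, ← h]
    exact ENNReal.le_tsum a
  · rw [ncond_apply _ h, ENNReal.mul_div_cancel h (fmass_ne_top ω j)]

lemma hnorm_bind_map (r : PMF (Fin n)) (φ : Fin n → PMF A) :
    hnorm (r.bind fun i => (φ i).map fun a => (i, a)) = r.bind fun i => PMF.pure (i, φ i) := by
  rw [hnorm, fstM_bind_map]
  exact PMF.bind_congr_of_mem_support fun i hi => by
    rw [ncond_bind_map r φ ((PMF.mem_support_iff r i).mp hi)]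

theorem hnorm_unique_general (A : Type*) (n : ℕ) :
    (∀ (r : PMF (Fin n)) (φ : Fin n → PMF A),
        hnorm (r.bind fun i => (φ i).map fun a => (i, a)) =
          r.bind fun i => PMF.pure (i, φ i)) ∧
    (∀ h : PMF (Fin n × A) → PMF (Fin n × PMF A),
        (∀ (r : PMF (Fin n)) (φ : Fin n → PMF A),
          h (r.bind fun i => (φ i).map fun a => (i, a)) =
            r.bind fun i => PMF.pure (i, φ i)) →
        h = hnorm) := by
  refine ⟨hnorm_bind_map, fun h hh => funext fun ω => ?_⟩
  -- every `ω` is a mixture `Σ_i ω[i] · (i, ω_i)`, on which `h` is prescribed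
  rw [← fstM_bind_ncond ω, hh, fstM_bind_ncond]
  rfl

/-- equational characterisation of hyper normalisation: `N` satisfies
`N(Σ_i r(i)·D(κ_i)(φ(i))) = Σ_i r(i)·η(i, φ(i))` and is the unique such function. -/
theorem hnorm_unique (A : Type*) [Fintype A] [Nonempty A] (n : ℕ) :
    (∀ (r : PMF (Fin n)) (φ : Fin n → PMF A),
        hnorm (r.bind fun i => (φ i).map fun a => (i, a)) =
          r.bind fun i => PMF.pure (i, φ i)) ∧
    (∀ h : PMF (Fin n × A) → PMF (Fin n × PMF A),
        (∀ (r : PMF (Fin n)) (φ : Fin n → PMF A),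
          h (r.bind fun i => (φ i).map fun a => (i, a)) =
            r.bind fun i => PMF.pure (i, φ i)) →
        h = hnorm) :=
  hnorm_unique_general A n

end HyperNorm
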